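/- arXiv:2512.04650 — 10 statements merged into one kernel-verified Lean document; each statement's English description precedes it below -/
import Mathlib

section
/- Let f be a bijection of the interval (0,1] onto itself with inverse Ψ, with f(1) = 1, such that f is a Weierstrass function on (0,1]. Then for every n ≥ 2 and all x₁, …, xₙ ∈ (0,1]: (∑_{i=1}^n x_i) - (n-1) ≤ f(∏_{i=1}^n Ψ(x_i)) ≤ ∏_{i=1}^n x_i. -/
/-! The lower Weierstrass inequality says that `1 - f` is subadditive and the upper one that the
nonnegative `f` is submultiplicative on the monoid `(0,1]`; by induction on the number of factors
both extend to finite products, and at the points `Ψ xᵢ ∈ (0,1]` we have `f (Ψ xᵢ) = xᵢ`. -/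

open Finset

namespace Finset

variable {M ι : Type*} [CommMonoid M] {f : M → ℝ}

theorem sum_sub_card_sub_one_le_apply_prod (h_one : 1 ≤ f 1)
    (h_mul : ∀ a b, f a + f b - 1 ≤ f (a * b)) (s : Finset ι) (g : ι → M) :
    ∑ i ∈ s, f (g i) - (#s - 1 : ℝ) ≤ f (∏ i ∈ s, g i) := by
  classical
  induction s using Finset.induction_on with
  | empty => simpa using h_one
  | insert a s ha ih =>
    rw [sum_insert ha, prod_insert ha, card_insert_of_notMem ha]
    push_cast
    linarith [h_mul (g a) (∏ i ∈ s, g i)]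

theorem apply_prod_le_prod_apply (h_one : f 1 ≤ 1) (h_nonneg : ∀ a, 0 ≤ f a)
    (h_mul : ∀ a b, f (a * b) ≤ f a * f b) (s : Finset ι) (g : ι → M) :
    f (∏ i ∈ s, g i) ≤ ∏ i ∈ s, f (g i) := by
  classical
  induction s using Finset.induction_on with
  | empty => simpa using h_one
  | insert a s ha ih =>
    rw [prod_insert ha, prod_insert ha]
    exact (h_mul _ _).trans (mul_le_mul_of_nonneg_left ih (h_nonneg _))

end Finset

theorem weierstrass_inverse_prod_Ioc_general (f Ψ : ℝ → ℝ)
    (hΨ_maps : Set.MapsTo Ψ (Set.Ioc 0 1) (Set.Ioc 0 1))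
    (hfΨ : ∀ x ∈ Set.Ioc (0:ℝ) 1, f (Ψ x) = x)
    (hpos : ∀ x ∈ Set.Ioc (0:ℝ) 1, 0 < f x)
    (hf1 : f 1 = 1)
    (hW : ∀ x ∈ Set.Ioc (0:ℝ) 1, ∀ y ∈ Set.Ioc (0:ℝ) 1,
      f x + f y - 1 ≤ f (x * y) ∧ f (x * y) ≤ f x * f y)
    (n : ℕ) (x : Fin n → ℝ) (hx : ∀ i, x i ∈ Set.Ioc (0:ℝ) 1) :
    (∑ i, x i) - ((n : ℝ) - 1) ≤ f (∏ i, Ψ (x i)) ∧ f (∏ i, Ψ (x i)) ≤ ∏ i, x i := by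
  let F : Set.Ioc (0:ℝ) 1 → ℝ := fun t ↦ f t
  let y : Fin n → Set.Ioc (0:ℝ) 1 := fun i ↦ ⟨Ψ (x i), hΨ_maps (hx i)⟩
  have hFy : ∀ i, F (y i) = x i := fun i ↦ hfΨ _ (hx i)
  have hprod : ∏ i, Ψ (x i) = ((∏ i, y i : Set.Ioc (0:ℝ) 1) : ℝ) :=
    (map_prod Set.Ioc.coeMonoidHom y univ).symm
  have lower := sum_sub_card_sub_one_le_apply_prod (f := F) hf1.ge
    (fun a b ↦ (hW a a.2 b b.2).1) univ y
  have upper := apply_prod_le_prod_apply (f := F) hf1.le (fun a ↦ (hpos a a.2).le)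
    (fun a b ↦ (hW a a.2 b b.2).2) univ y
  simp only [hFy, card_univ, Fintype.card_fin] at lower upper
  rw [hprod]
  exact ⟨lower, upper⟩

/-- If `f` is a bijection of `(0,1]` onto itself with inverse `Ψ`, `f 1 = 1`, and `f` is a
Weierstrass function on `(0,1]`, then for every `n ≥ 2` and all `x₁, …, xₙ ∈ (0,1]`:
`(∑ i, x i) - (n - 1) ≤ f (∏ i, Ψ (x i)) ≤ ∏ i, x i`. -/
theorem weierstrass_inverse_prod_Ioc (f Ψ : ℝ → ℝ)
    (hf_maps : Set.MapsTo f (Set.Ioc 0 1) (Set.Ioc 0 1))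
    (hΨ_maps : Set.MapsTo Ψ (Set.Ioc 0 1) (Set.Ioc 0 1))
    (hΨf : ∀ x ∈ Set.Ioc (0:ℝ) 1, Ψ (f x) = x)
    (hfΨ : ∀ x ∈ Set.Ioc (0:ℝ) 1, f (Ψ x) = x)
    (hpos : ∀ x ∈ Set.Ioc (0:ℝ) 1, 0 < f x)
    (hf1 : f 1 = 1)
    (hW : ∀ x ∈ Set.Ioc (0:ℝ) 1, ∀ y ∈ Set.Ioc (0:ℝ) 1,
      f x + f y - 1 ≤ f (x * y) ∧ f (x * y) ≤ f x * f y)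
    (n : ℕ) (hn : 2 ≤ n) (x : Fin n → ℝ) (hx : ∀ i, x i ∈ Set.Ioc (0:ℝ) 1) :
    (∑ i, x i) - ((n : ℝ) - 1) ≤ f (∏ i, Ψ (x i)) ∧ f (∏ i, Ψ (x i)) ≤ ∏ i, x i :=
  weierstrass_inverse_prod_Ioc_general f Ψ hΨ_maps hfΨ hpos hf1 hW n x hx
end

section
/- Let f be a positive function of class C¹ on (0,1] with f(1) = 1, and suppose the function H_f(x) := x·f'(x) is non-decreasing on (0,1]. Then f is an l-Weierstrass function on (0,1], i.e. f(x·y) ≥ f(x) + f(y) - 1 for all x, y ∈ (0,1]. -/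
/-!
For fixed `x ∈ (0,1]` put `g t = f (x * t) - f t`. Its derivative is
`x f'(x t) - f'(t) = (H_f (x t) - H_f t) / t ≤ 0`, because `x t ≤ t` and `H_f` is non-decreasing.
So `g` is antitone on `(0,1]`, and `g y ≥ g 1 = f x - 1` is the claimed inequality.
-/

open Set

lemma mul_mem_Ioc_zero_one {x t : ℝ} (hx : x ∈ Ioc (0 : ℝ) 1) (ht : t ∈ Ioc (0 : ℝ) 1) :
    x * t ∈ Ioc (0 : ℝ) 1 :=
  ⟨mul_pos hx.1 ht.1, mul_le_one₀ hx.2 ht.1.le ht.2⟩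

lemma mul_mem_Ioo_zero_one {x t : ℝ} (hx : x ∈ Ioc (0 : ℝ) 1) (ht : t ∈ Ioo (0 : ℝ) 1) :
    x * t ∈ Ioo (0 : ℝ) 1 :=
  ⟨mul_pos hx.1 ht.1, (mul_le_of_le_one_left ht.1.le hx.2).trans_lt ht.2⟩

section

variable {f f' : ℝ → ℝ} {x : ℝ}

lemma mul_deriv_comp_mul_le_of_monotoneOn {t : ℝ}
    (hH : MonotoneOn (fun s => s * f' s) (Ioo 0 1)) (hx : x ∈ Ioc (0 : ℝ) 1)
    (ht : t ∈ Ioo (0 : ℝ) 1) : f' (x * t) * x ≤ f' t := by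
  have hHt : x * t * f' (x * t) ≤ t * f' t :=
    hH (mul_mem_Ioo_zero_one hx ht) ht (mul_le_of_le_one_left ht.1.le hx.2)
  refine le_of_mul_le_mul_left ?_ ht.1
  linarith

lemma antitoneOn_comp_mul_sub (hf : ContinuousOn f (Ioc 0 1))
    (hderiv : ∀ t ∈ Ioo (0 : ℝ) 1, HasDerivAt f (f' t) t)
    (hH : MonotoneOn (fun s => s * f' s) (Ioo 0 1)) (hx : x ∈ Ioc (0 : ℝ) 1) :
    AntitoneOn (fun t => f (x * t) - f t) (Ioc 0 1) := by
  have hg : ∀ t ∈ Ioo (0 : ℝ) 1,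
      HasDerivAt (fun t => f (x * t) - f t) (f' (x * t) * x - f' t) t := fun t ht =>
    ((hderiv _ (mul_mem_Ioo_zero_one hx ht)).comp t
      ((hasDerivAt_id t).const_mul x |>.congr_deriv (mul_one x))).sub (hderiv t ht)
  refine antitoneOn_of_hasDerivWithinAt_nonpos (f' := fun t => f' (x * t) * x - f' t)
    (convex_Ioc 0 1) ?_ ?_ ?_
  · exact (hf.comp (continuousOn_const.mul continuousOn_id) fun t ht =>
      mul_mem_Ioc_zero_one hx ht).sub hf
  · rw [interior_Ioc]
    exact fun t ht => (hg t ht).hasDerivWithinAt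
  · rw [interior_Ioc]
    exact fun t ht => sub_nonpos.2 (mul_deriv_comp_mul_le_of_monotoneOn hH hx ht)

end

theorem lWeierstrass_of_monotone_Hf_Ioc_general (f f' : ℝ → ℝ)
    (hderiv : ∀ x ∈ Set.Ioc (0:ℝ) 1, HasDerivWithinAt f (f' x) (Set.Ioc 0 1) x)
    (hf1 : f 1 = 1)
    (hH : MonotoneOn (fun x => x * f' x) (Set.Ioc 0 1)) :
    ∀ x ∈ Set.Ioc (0:ℝ) 1, ∀ y ∈ Set.Ioc (0:ℝ) 1, f x + f y - 1 ≤ f (x * y) := by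
  intro x hx y hy
  have hf : ContinuousOn f (Ioc 0 1) := fun t ht => (hderiv t ht).continuousWithinAt
  have hderiv' : ∀ t ∈ Ioo (0 : ℝ) 1, HasDerivAt f (f' t) t := fun t ht =>
    (hderiv t (Ioo_subset_Ioc_self ht)).hasDerivAt (Ioc_mem_nhds ht.1 ht.2)
  have hanti := antitoneOn_comp_mul_sub hf hderiv' (hH.mono Ioo_subset_Ioc_self) hx
  have key := hanti hy (right_mem_Ioc.2 one_pos) hy.2
  simp only [mul_one, hf1] at key
  linarith

/-- If `f` is a positive `C¹` function on `(0,1]` with `f 1 = 1` (here `f'` is the derivative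
of `f` on `(0,1]`, continuous there) such that `H_f x = x * f' x` is non-decreasing on
`(0,1]`, then `f` is an l-Weierstrass function on `(0,1]`. -/
theorem lWeierstrass_of_monotone_Hf_Ioc (f f' : ℝ → ℝ)
    (hderiv : ∀ x ∈ Set.Ioc (0:ℝ) 1, HasDerivWithinAt f (f' x) (Set.Ioc 0 1) x)
    (hcont : ContinuousOn f' (Set.Ioc 0 1))
    (hpos : ∀ x ∈ Set.Ioc (0:ℝ) 1, 0 < f x)
    (hf1 : f 1 = 1)
    (hH : MonotoneOn (fun x => x * f' x) (Set.Ioc 0 1)) :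
    ∀ x ∈ Set.Ioc (0:ℝ) 1, ∀ y ∈ Set.Ioc (0:ℝ) 1, f x + f y - 1 ≤ f (x * y) :=
  lWeierstrass_of_monotone_Hf_Ioc_general f f' hderiv hf1 hH
end

section
/- Let f be a positive function of class C¹ on [1,∞) with f(1) = 1, and suppose the function H_f(x) := x·f'(x) is non-decreasing on [1,∞). Then f is an l-Weierstrass function on [1,∞), i.e. f(x·y) ≥ f(x) + f(y) - 1 for all x, y ∈ [1,∞). -/
/-!
For fixed `c ≥ 1` the function `g t = f (c t) - f t` has derivative
`c f'(c t) - f' t = (H_f (c t) - H_f t) / t ≥ 0`, so it is non-decreasing on `[1, ∞)`;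
`g y ≥ g 1 = f c - 1` is the claim.
-/

open Set

section
variable {f f' : ℝ → ℝ} {a c t : ℝ}

lemma mapsTo_const_mul_Ici (ha : 0 ≤ a) (hc : 1 ≤ c) : MapsTo (c * ·) (Ici a) (Ici a) :=
  fun t (ht : a ≤ t) => show a ≤ c * t by nlinarith

lemma le_const_mul_comp_const_mul_of_monotoneOn_mul
    (hH : MonotoneOn (fun x => x * f' x) (Ici a)) (ha : 0 < a) (hc : 1 ≤ c) (ht : a ≤ t) :
    f' t ≤ c * f' (c * t) := by
  have ht0 : 0 < t := ha.trans_le ht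
  have hHt : t * f' t ≤ c * t * f' (c * t) :=
    hH ht (mapsTo_const_mul_Ici ha.le hc ht) (le_mul_of_one_le_left ht0.le hc)
  have : t * f' t ≤ t * (c * f' (c * t)) := by linarith
  exact le_of_mul_le_mul_left this ht0

lemma monotoneOn_comp_const_mul_sub_of_monotoneOn_mul
    (hderiv : ∀ x ∈ Ici a, HasDerivWithinAt f (f' x) (Ici a) x)
    (hH : MonotoneOn (fun x => x * f' x) (Ici a)) (ha : 0 < a) (hc : 1 ≤ c) :
    MonotoneOn (fun t => f (c * t) - f t) (Ici a) := by
  have hmaps := mapsTo_const_mul_Ici ha.le hc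
  have hderiv_comp : ∀ t ∈ Ici a,
      HasDerivWithinAt (fun t => f (c * t)) (f' (c * t) * c) (Ici a) t := fun t ht => by
    have := (hderiv (c * t) (hmaps ht)).comp t
      ((hasDerivAt_id t).const_mul c).hasDerivWithinAt hmaps
    simpa [Function.comp_def] using this
  have hcont : ContinuousOn f (Ici a) := fun t ht => (hderiv t ht).continuousWithinAt
  refine monotoneOn_of_hasDerivWithinAt_nonneg (f' := fun t => f' (c * t) * c - f' t)
    (convex_Ici a)
    ((hcont.comp (continuous_const_mul c).continuousOn hmaps).sub hcont)
    (fun t ht => ?_) (fun t ht => ?_)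
  · rw [interior_Ici] at ht ⊢
    have ht' : t ∈ Ici a := Ioi_subset_Ici_self ht
    exact ((hderiv_comp t ht').sub (hderiv t ht')).mono Ioi_subset_Ici_self
  · rw [interior_Ici] at ht
    have := le_const_mul_comp_const_mul_of_monotoneOn_mul hH ha hc (le_of_lt ht)
    linarith
end

theorem lWeierstrass_of_monotone_Hf_Ici_general (f f' : ℝ → ℝ)
    (hderiv : ∀ x ∈ Set.Ici (1:ℝ), HasDerivWithinAt f (f' x) (Set.Ici 1) x)
    (hf1 : f 1 = 1)
    (hH : MonotoneOn (fun x => x * f' x) (Set.Ici 1)) :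
    ∀ x ∈ Set.Ici (1:ℝ), ∀ y ∈ Set.Ici (1:ℝ), f x + f y - 1 ≤ f (x * y) := by
  intro x hx y hy
  have := monotoneOn_comp_const_mul_sub_of_monotoneOn_mul hderiv hH one_pos hx
    self_mem_Ici hy hy
  simp only [mul_one, hf1] at this
  linarith

/-- If `f` is a positive `C¹` function on `[1,∞)` with `f 1 = 1` (here `f'` is the derivative
of `f` on `[1,∞)`, continuous there) such that `H_f x = x * f' x` is non-decreasing on
`[1,∞)`, then `f` is an l-Weierstrass function on `[1,∞)`. -/
theorem lWeierstrass_of_monotone_Hf_Ici (f f' : ℝ → ℝ)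
    (hderiv : ∀ x ∈ Set.Ici (1:ℝ), HasDerivWithinAt f (f' x) (Set.Ici 1) x)
    (hcont : ContinuousOn f' (Set.Ici 1))
    (hpos : ∀ x ∈ Set.Ici (1:ℝ), 0 < f x)
    (hf1 : f 1 = 1)
    (hH : MonotoneOn (fun x => x * f' x) (Set.Ici 1)) :
    ∀ x ∈ Set.Ici (1:ℝ), ∀ y ∈ Set.Ici (1:ℝ), f x + f y - 1 ≤ f (x * y) :=
  lWeierstrass_of_monotone_Hf_Ici_general f f' hderiv hf1 hH
end

section
/- Let f be a positive function of class C¹ on (0,1] with f(1) = 1, and suppose the function H_f(x) := x·f'(x) is strictly increasing on (0,1]. Then for all x, y ∈ (0,1) the inequality is strict: f(x·y) > f(x) + f(y) - 1. -/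
/-! For fixed `y ∈ (0,1)` the function `t ↦ f (t * y) - f t` has derivative
`(H_f (t * y) - H_f t) / t < 0`, so it is strictly decreasing on `(0,1]`. Comparing its values
at `x < 1` and at `1` gives `f (x * y) - f x > f y - 1`. -/

open Set

lemma mul_deriv_comp_mul_lt {f' : ℝ → ℝ} {s : Set ℝ} {t y : ℝ}
    (hH : StrictMonoOn (fun x => x * f' x) s) (ht : t ∈ s) (hty : t * y ∈ s)
    (ht0 : 0 < t) (hy1 : y < 1) : f' (t * y) * y < f' t := by
  have hlt : t * y < t := mul_lt_of_lt_one_right ht0 hy1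
  have hH' : t * (f' (t * y) * y) < t * f' t := by
    linarith [hH hty ht hlt]
  exact lt_of_mul_lt_mul_left hH' ht0.le

lemma strictAntiOn_comp_mul_sub {f f' : ℝ → ℝ}
    (hderiv : ∀ x ∈ Ioc (0:ℝ) 1, HasDerivWithinAt f (f' x) (Ioc 0 1) x)
    (hH : StrictMonoOn (fun x => x * f' x) (Ioc 0 1)) {y : ℝ} (hy : y ∈ Ioo (0:ℝ) 1) :
    StrictAntiOn (fun t => f (t * y) - f t) (Ioc 0 1) := by
  have hmaps : MapsTo (· * y) (Ioc (0:ℝ) 1) (Ioc 0 1) := fun t ht =>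
    ⟨mul_pos ht.1 hy.1, mul_le_one₀ ht.2 hy.1.le hy.2.le⟩
  have hfcont : ContinuousOn f (Ioc 0 1) := fun t ht => (hderiv t ht).continuousWithinAt
  have hfderiv : ∀ t ∈ Ioo (0:ℝ) 1, HasDerivAt f (f' t) t := fun t ht =>
    (hderiv t (Ioo_subset_Ioc_self ht)).hasDerivAt (Ioc_mem_nhds ht.1 ht.2)
  refine strictAntiOn_of_deriv_neg (convex_Ioc 0 1)
    ((hfcont.comp (by fun_prop) hmaps).sub hfcont) fun t ht => ?_
  rw [interior_Ioc] at ht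
  have hty : t * y ∈ Ioo (0:ℝ) 1 := ⟨mul_pos ht.1 hy.1, by nlinarith [ht.1, ht.2, hy.1, hy.2]⟩
  have hg : HasDerivAt (fun t => f (t * y) - f t) (f' (t * y) * y - f' t) t :=
    ((hfderiv _ hty).comp t (hasDerivAt_mul_const y)).sub (hfderiv t ht)
  rw [hg.deriv, sub_neg]
  exact mul_deriv_comp_mul_lt hH (Ioo_subset_Ioc_self ht) (Ioo_subset_Ioc_self hty) ht.1 hy.2

theorem strict_lWeierstrass_of_strictMono_Hf_Ioc_general (f f' : ℝ → ℝ)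
    (hderiv : ∀ x ∈ Set.Ioc (0:ℝ) 1, HasDerivWithinAt f (f' x) (Set.Ioc 0 1) x)
    (hf1 : f 1 = 1)
    (hH : StrictMonoOn (fun x => x * f' x) (Set.Ioc 0 1)) :
    ∀ x ∈ Set.Ioo (0:ℝ) 1, ∀ y ∈ Set.Ioo (0:ℝ) 1, f x + f y - 1 < f (x * y) := by
  intro x hx y hy
  have key := strictAntiOn_comp_mul_sub hderiv hH hy (Ioo_subset_Ioc_self hx)
    (right_mem_Ioc.2 zero_lt_one) hx.2
  simp only [one_mul, hf1] at key
  linarith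

/-- If `f` is a positive `C¹` function on `(0,1]` with `f 1 = 1` such that
`H_f x = x * f' x` is strictly increasing on `(0,1]`, then for all `x, y ∈ (0,1)` the
l-Weierstrass inequality is strict: `f (x * y) > f x + f y - 1`. -/
theorem strict_lWeierstrass_of_strictMono_Hf_Ioc (f f' : ℝ → ℝ)
    (hderiv : ∀ x ∈ Set.Ioc (0:ℝ) 1, HasDerivWithinAt f (f' x) (Set.Ioc 0 1) x)
    (hcont : ContinuousOn f' (Set.Ioc 0 1))
    (hpos : ∀ x ∈ Set.Ioc (0:ℝ) 1, 0 < f x)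
    (hf1 : f 1 = 1)
    (hH : StrictMonoOn (fun x => x * f' x) (Set.Ioc 0 1)) :
    ∀ x ∈ Set.Ioo (0:ℝ) 1, ∀ y ∈ Set.Ioo (0:ℝ) 1, f x + f y - 1 < f (x * y) :=
  strict_lWeierstrass_of_strictMono_Hf_Ioc_general f f' hderiv hf1 hH
end

section
/- Let f be a positive function of class C² on (0,1] with f(1) = 1, and suppose that G_f(x) := f'(x)/x + f''(x) is non-negative for all x ∈ (0,1]. Then f is an l-Weierstrass function on (0,1], i.e. f(x·y) ≥ f(x) + f(y) - 1 for all x, y ∈ (0,1]. -/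
/-!
The condition `G_f ≥ 0` says exactly that `(t f'(t))' = t G_f(t) ≥ 0`, so `t ↦ t f'(t)` is
monotone. For fixed `x ≤ 1`, the function `t ↦ f t - f (x t)` has derivative
`(t f'(t) - x t f'(x t)) / t ≥ 0`, hence is monotone; comparing its values at `y` and at `1`
gives `f y - f (x y) ≤ f 1 - f x = 1 - f x`.
-/

open Set

theorem monotoneOn_of_hasDerivWithinAt_self_nonneg {D : Set ℝ} (hD : Convex ℝ D) {f f' : ℝ → ℝ}
    (hf : ∀ x ∈ D, HasDerivWithinAt f (f' x) D x) (hf'₀ : ∀ x ∈ interior D, 0 ≤ f' x) :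
    MonotoneOn f D :=
  monotoneOn_of_hasDerivWithinAt_nonneg hD (fun x hx ↦ (hf x hx).continuousWithinAt)
    (fun x hx ↦ (hf x (interior_subset hx)).mono interior_subset) hf'₀

theorem monotoneOn_id_mul_of_nonneg_Gf {s : Set ℝ} (hs : Convex ℝ s) (hs₀ : s ⊆ Ioi 0)
    {f' f'' : ℝ → ℝ} (hderiv' : ∀ x ∈ s, HasDerivWithinAt f' (f'' x) s x)
    (hG : ∀ x ∈ s, 0 ≤ f' x / x + f'' x) :
    MonotoneOn (fun t ↦ t * f' t) s := by
  refine monotoneOn_of_hasDerivWithinAt_self_nonneg hs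
    (fun t ht ↦ (hasDerivWithinAt_id t s).mul (hderiv' t ht)) fun t ht ↦ ?_
  have ht₀ : 0 < t := hs₀ (interior_subset ht)
  calc (0 : ℝ) ≤ t * (f' t / t + f'' t) := mul_nonneg ht₀.le (hG t (interior_subset ht))
    _ = 1 * f' t + t * f'' t := by field_simp

theorem monotoneOn_sub_comp_const_mul {s : Set ℝ} (hs : Convex ℝ s) (hs₀ : s ⊆ Ioi 0)
    {f f' : ℝ → ℝ} {x : ℝ} (hx : x ≤ 1) (hxs : MapsTo (x * ·) s s)
    (hderiv : ∀ t ∈ s, HasDerivWithinAt f (f' t) s t)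
    (hmono : MonotoneOn (fun t ↦ t * f' t) s) :
    MonotoneOn (fun t ↦ f t - f (x * t)) s := by
  refine monotoneOn_of_hasDerivWithinAt_self_nonneg hs
    (fun t ht ↦ (hderiv t ht).sub
      ((hderiv (x * t) (hxs ht)).comp t ((hasDerivWithinAt_id t s).const_mul x) hxs))
    fun t ht ↦ ?_
  have ht' : t ∈ s := interior_subset ht
  have ht₀ : 0 < t := hs₀ ht'
  have hxt : x * t * f' (x * t) ≤ t * f' t :=
    hmono (hxs ht') ht' (mul_le_of_le_one_left ht₀.le hx)
  refine nonneg_of_mul_nonneg_right ?_ ht₀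
  calc (0 : ℝ) ≤ t * f' t - x * t * f' (x * t) := sub_nonneg.2 hxt
    _ = t * (f' t - f' (x * t) * (x * 1)) := by ring

theorem lWeierstrass_of_nonneg_Gf_Ioc_general (f f' f'' : ℝ → ℝ)
    (hderiv : ∀ x ∈ Set.Ioc (0:ℝ) 1, HasDerivWithinAt f (f' x) (Set.Ioc 0 1) x)
    (hderiv' : ∀ x ∈ Set.Ioc (0:ℝ) 1, HasDerivWithinAt f' (f'' x) (Set.Ioc 0 1) x)
    (hf1 : f 1 = 1)
    (hG : ∀ x ∈ Set.Ioc (0:ℝ) 1, 0 ≤ f' x / x + f'' x) :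
    ∀ x ∈ Set.Ioc (0:ℝ) 1, ∀ y ∈ Set.Ioc (0:ℝ) 1, f x + f y - 1 ≤ f (x * y) := by
  intro x hx y hy
  have hxs : MapsTo (x * ·) (Ioc (0 : ℝ) 1) (Ioc 0 1) :=
    fun t ht ↦ ⟨mul_pos hx.1 ht.1, mul_le_one₀ hx.2 ht.1.le ht.2⟩
  have hmono := monotoneOn_sub_comp_const_mul (convex_Ioc 0 1) Ioc_subset_Ioi_self hx.2 hxs
    hderiv (monotoneOn_id_mul_of_nonneg_Gf (convex_Ioc 0 1) Ioc_subset_Ioi_self hderiv' hG)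
  have key : f y - f (x * y) ≤ f 1 - f (x * 1) := hmono hy (right_mem_Ioc.2 one_pos) hy.2
  rw [mul_one, hf1] at key
  linarith

/-- If `f` is a positive `C²` function on `(0,1]` with `f 1 = 1` (with first derivative `f'`
and second derivative `f''` on `(0,1]`, `f''` continuous there) such that
`G_f x = f' x / x + f'' x` is non-negative on `(0,1]`, then `f` is an l-Weierstrass
function on `(0,1]`. -/
theorem lWeierstrass_of_nonneg_Gf_Ioc (f f' f'' : ℝ → ℝ)
    (hderiv : ∀ x ∈ Set.Ioc (0:ℝ) 1, HasDerivWithinAt f (f' x) (Set.Ioc 0 1) x)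
    (hderiv' : ∀ x ∈ Set.Ioc (0:ℝ) 1, HasDerivWithinAt f' (f'' x) (Set.Ioc 0 1) x)
    (hcont : ContinuousOn f'' (Set.Ioc 0 1))
    (hpos : ∀ x ∈ Set.Ioc (0:ℝ) 1, 0 < f x)
    (hf1 : f 1 = 1)
    (hG : ∀ x ∈ Set.Ioc (0:ℝ) 1, 0 ≤ f' x / x + f'' x) :
    ∀ x ∈ Set.Ioc (0:ℝ) 1, ∀ y ∈ Set.Ioc (0:ℝ) 1, f x + f y - 1 ≤ f (x * y) :=
  lWeierstrass_of_nonneg_Gf_Ioc_general f f' f'' hderiv hderiv' hf1 hG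
end

section
/- For all x, y ∈ (0,1]: x + y - 1 ≤ (4/π)·arctan( tan(π·x/4) · tan(π·y/4) ) ≤ x·y. -/
/-!
Write `a = tan (πx/4)` and `b = tan (πy/4)`, both in `(0, 1]`. The lower bound is
`arctan a + arctan b - π/4 ≤ arctan (a b)`; by the addition formula for `arctan` this reduces
to `a + b ≤ 1 + a b`, i.e. `(1 - a)(1 - b) ≥ 0`.

For the upper bound, `u ↦ arctan (b tan u)` is convex on `[0, π/2)` when `0 ≤ b ≤ 1`: its
derivative is `b (1 + t²) / (1 + b² t²)` with `t = tan u`, increasing in `t`. It vanishes at `0`,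
so on `[0, π/4]` it lies below its chord, `arctan (b tan u) ≤ (4u/π) arctan b`; take `u = πx/4`.
-/

open Real Set

namespace Real

lemma tan_le_one_of_le_pi_div_four {u : ℝ} (h₁ : -(π / 2) < u) (h₂ : u ≤ π / 4) : tan u ≤ 1 :=
  tan_pi_div_four ▸ strictMonoOn_tan.monotoneOn ⟨h₁, by linarith⟩
    ⟨by linarith [pi_pos], by linarith [pi_pos]⟩ h₂

lemma hasDerivAt_arctan_const_mul_tan (b : ℝ) {u : ℝ} (hu : cos u ≠ 0) :
    HasDerivAt (fun u => arctan (b * tan u)) (b * (1 + tan u ^ 2) / (1 + (b * tan u) ^ 2)) u := by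
  refine ((hasDerivAt_arctan _).comp u ((hasDerivAt_tan hu).const_mul b)).congr_deriv ?_
  rw [one_div (cos u ^ 2), ← inv_one_add_tan_sq hu]
  field_simp

lemma monotoneOn_const_mul_one_add_sq_div {b : ℝ} (hb₀ : 0 ≤ b) (hb₁ : b ≤ 1) :
    MonotoneOn (fun t : ℝ => b * (1 + t ^ 2) / (1 + (b * t) ^ 2)) (Ici 0) := by
  intro s (hs : 0 ≤ s) t _ hst
  rw [div_le_div_iff₀ (by positivity) (by positivity)]
  have hb : b ^ 2 ≤ 1 := by nlinarith
  have hst2 : s ^ 2 ≤ t ^ 2 := by nlinarith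
  nlinarith [mul_nonneg (mul_nonneg hb₀ (sub_nonneg.2 hb)) (sub_nonneg.2 hst2)]

lemma convexOn_arctan_const_mul_tan {b : ℝ} (hb₀ : 0 ≤ b) (hb₁ : b ≤ 1) :
    ConvexOn ℝ (Ico 0 (π / 2)) (fun u => arctan (b * tan u)) := by
  have hcos : ∀ u ∈ Ico 0 (π / 2), cos u ≠ 0 := fun u hu =>
    (cos_pos_of_mem_Ioo ⟨by linarith [hu.1, pi_pos], hu.2⟩).ne'
  have hderiv : EqOn (deriv fun u => arctan (b * tan u))
      ((fun t => b * (1 + t ^ 2) / (1 + (b * t) ^ 2)) ∘ tan) (Ioo 0 (π / 2)) := fun u hu =>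
    (hasDerivAt_arctan_const_mul_tan b (hcos u (Ioo_subset_Ico_self hu))).deriv
  have htan : MonotoneOn tan (Ioo 0 (π / 2)) := strictMonoOn_tan.monotoneOn.mono
    (Ioo_subset_Ioo_left (by linarith [pi_pos]))
  refine MonotoneOn.convexOn_of_deriv (convex_Ico _ _) ?_ ?_ ?_
  · exact continuous_arctan.comp_continuousOn
      (continuousOn_const.mul (continuousOn_tan.mono hcos))
  · rw [interior_Ico]
    exact fun u hu => (hasDerivAt_arctan_const_mul_tan b
      (hcos u (Ioo_subset_Ico_self hu))).differentiableAt.differentiableWithinAt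
  · rw [interior_Ico]
    refine ((monotoneOn_const_mul_one_add_sq_div hb₀ hb₁).comp htan ?_).congr hderiv.symm
    exact fun u hu => tan_nonneg_of_nonneg_of_le_pi_div_two hu.1.le hu.2.le

lemma arctan_const_mul_tan_le {b u : ℝ} (hb₀ : 0 ≤ b) (hb₁ : b ≤ 1) (hu₀ : 0 < u)
    (hu : u ≤ π / 4) : arctan (b * tan u) ≤ 4 / π * u * arctan b := by
  have hπ := pi_pos
  have h := (convexOn_arctan_const_mul_tan hb₀ hb₁).secant_mono (a := 0) (x := u) (y := π / 4)
    ⟨le_rfl, by positivity⟩ ⟨hu₀.le, by linarith⟩ ⟨by positivity, by linarith⟩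
    hu₀.ne' (by positivity) hu
  simp only [tan_zero, mul_zero, arctan_zero, sub_zero, tan_pi_div_four, mul_one] at h
  rw [div_le_div_iff₀ hu₀ (by positivity)] at h
  calc arctan (b * tan u) = arctan (b * tan u) * (π / 4) * (4 / π) := by field_simp
    _ ≤ arctan b * u * (4 / π) := by gcongr
    _ = 4 / π * u * arctan b := by ring

lemma arctan_add_arctan_sub_pi_div_four_le {a b : ℝ} (ha₀ : 0 ≤ a) (ha₁ : a ≤ 1) (hb₀ : 0 ≤ b)
    (hb₁ : b ≤ 1) : arctan a + arctan b - π / 4 ≤ arctan (a * b) := by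
  rcases (mul_le_one₀ ha₁ hb₀ hb₁).lt_or_eq with hab | hab
  · have hsum : arctan a + arctan b = arctan ((a + b) / (1 - a * b)) := arctan_add hab
    have hshift : arctan (a * b) + π / 4 = arctan ((a * b + 1) / (1 - a * b)) := by
      rw [← arctan_one, arctan_add (by rwa [mul_one]), mul_one]
    have hle : (a + b) / (1 - a * b) ≤ (a * b + 1) / (1 - a * b) :=
      div_le_div_of_nonneg_right (by nlinarith [mul_nonneg (sub_nonneg.2 ha₁) (sub_nonneg.2 hb₁)])
        (by linarith)
    linarith [arctan_mono hle]
  · obtain rfl : a = 1 := by nlinarith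
    obtain rfl : b = 1 := by nlinarith
    simp only [arctan_one, mul_one]
    linarith

end Real

/-- For all `x, y ∈ (0,1]`:
`x + y - 1 ≤ (4/π) * arctan (tan (π*x/4) * tan (π*y/4)) ≤ x * y`. -/
theorem arctan_tan_weierstrass :
    ∀ x ∈ Set.Ioc (0:ℝ) 1, ∀ y ∈ Set.Ioc (0:ℝ) 1,
      x + y - 1 ≤ (4 / Real.pi) * Real.arctan
          (Real.tan (Real.pi * x / 4) * Real.tan (Real.pi * y / 4)) ∧
        (4 / Real.pi) * Real.arctan
          (Real.tan (Real.pi * x / 4) * Real.tan (Real.pi * y / 4)) ≤ x * y := by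
  have hπ := pi_pos
  have hangle : ∀ z ∈ Ioc (0:ℝ) 1, 0 < π * z / 4 ∧ π * z / 4 ≤ π / 4 := fun z hz =>
    ⟨by positivity [hz.1], by nlinarith [hz.2]⟩
  have htan : ∀ z ∈ Ioc (0:ℝ) 1, 0 ≤ tan (π * z / 4) ∧ tan (π * z / 4) ≤ 1 ∧
      arctan (tan (π * z / 4)) = π * z / 4 := fun z hz =>
    ⟨tan_nonneg_of_nonneg_of_le_pi_div_two (hangle z hz).1.le (by linarith [hangle z hz]),
      tan_le_one_of_le_pi_div_four (by linarith [hangle z hz]) (hangle z hz).2,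
      arctan_tan (by linarith [hangle z hz]) (by linarith [hangle z hz])⟩
  intro x hx y hy
  obtain ⟨ha₀, ha₁, harctan_a⟩ := htan x hx
  obtain ⟨hb₀, hb₁, harctan_b⟩ := htan y hy
  constructor
  · have h := arctan_add_arctan_sub_pi_div_four_le ha₀ ha₁ hb₀ hb₁
    rw [harctan_a, harctan_b] at h
    calc x + y - 1 = 4 / π * (π * x / 4 + π * y / 4 - π / 4) := by field_simp
      _ ≤ _ := by gcongr
  · have h := arctan_const_mul_tan_le hb₀ hb₁ (hangle x hx).1 (hangle x hx).2
    rw [mul_comm, harctan_b] at h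
    calc 4 / π * arctan (tan (π * x / 4) * tan (π * y / 4))
        ≤ 4 / π * (4 / π * (π * x / 4) * (π * y / 4)) := by gcongr
      _ = x * y := by field_simp
end

section
/- The function f(x) = cos x / cos 1 (which is positive and submultiplicative on (0,1] with f(1) = 1) is not an l-Weierstrass function on (0,1]: for all x, y ∈ (0,1) one has f(x·y) < f(x) + f(y) - 1, equivalently cos(x·y) + cos 1 < cos x + cos y. -/
/-! By the sum-to-product formula,
`cos (x*y) - cos x = 2 sin (x*a) sin (x*b)` and `cos y - cos 1 = 2 sin a sin b` with
`a = (1+y)/2` and `b = (1-y)/2` in `(0,1)`. Since `sin` is positive and strictly increasing on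
`(0, π/2]` and `0 < x < 1`, each factor `sin (x*a)`, `sin (x*b)` is positive and smaller than
`sin a`, `sin b` respectively, so `cos (x*y) - cos x < cos y - cos 1`. -/

open Real

lemma cos_mul_sub_cos (t y : ℝ) :
    cos (t * y) - cos t = 2 * sin (t * ((1 + y) / 2)) * sin (t * ((1 - y) / 2)) := by
  rw [cos_sub_cos, show (t * y + t) / 2 = t * ((1 + y) / 2) by ring,
    show (t * y - t) / 2 = -(t * ((1 - y) / 2)) by ring, sin_neg]
  ring

lemma sin_mul_pos {x c : ℝ} (hx : 0 < x) (hx1 : x < 1) (hc : 0 < c) (hc' : c ≤ π / 2) :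
    0 < sin (x * c) :=
  sin_pos_of_pos_of_lt_pi (by positivity) (by nlinarith [pi_pos])

lemma sin_mul_lt_sin {x c : ℝ} (hx : 0 < x) (hx1 : x < 1) (hc : 0 < c) (hc' : c ≤ π / 2) :
    sin (x * c) < sin c :=
  sin_lt_sin_of_lt_of_le_pi_div_two (by nlinarith [pi_pos]) hc' (by nlinarith)

lemma cos_mul_add_cos_one_lt {x y : ℝ} (hx : 0 < x) (hx1 : x < 1) (hy : -1 < y) (hy1 : y < 1) :
    cos (x * y) + cos 1 < cos x + cos y := by
  have hpi : (1 : ℝ) ≤ π / 2 := by linarith [pi_gt_three]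
  have ha : 0 < (1 + y) / 2 := by linarith
  have hb : 0 < (1 - y) / 2 := by linarith
  have ha' : (1 + y) / 2 ≤ π / 2 := by linarith
  have hb' : (1 - y) / 2 ≤ π / 2 := by linarith
  have hprod : sin (x * ((1 + y) / 2)) * sin (x * ((1 - y) / 2))
      < sin ((1 + y) / 2) * sin ((1 - y) / 2) :=
    mul_lt_mul'' (sin_mul_lt_sin hx hx1 ha ha') (sin_mul_lt_sin hx hx1 hb hb')
      (sin_mul_pos hx hx1 ha ha').le (sin_mul_pos hx hx1 hb hb').le
  have hx_diff := cos_mul_sub_cos x y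
  have hone_diff := cos_mul_sub_cos 1 y
  simp only [one_mul] at hone_diff
  linarith

/-- The function `f x = cos x / cos 1` is not an l-Weierstrass function on `(0,1]`:
for all `x, y ∈ (0,1)` one has `f (x*y) < f x + f y - 1`, equivalently
`cos (x*y) + cos 1 < cos x + cos y`. -/
theorem cos_div_cos_one_not_lWeierstrass :
    ∀ x ∈ Set.Ioo (0:ℝ) 1, ∀ y ∈ Set.Ioo (0:ℝ) 1,
      Real.cos (x * y) / Real.cos 1 <
          Real.cos x / Real.cos 1 + Real.cos y / Real.cos 1 - 1 ∧
        Real.cos (x * y) + Real.cos 1 < Real.cos x + Real.cos y := by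
  rintro x ⟨hx, hx1⟩ y ⟨hy, hy1⟩
  have hlt := cos_mul_add_cos_one_lt hx hx1 (by linarith) hy1
  refine ⟨?_, hlt⟩
  have hcos1 : 0 < cos 1 := cos_one_pos
  rw [show cos x / cos 1 + cos y / cos 1 - 1 = (cos x + cos y - cos 1) / cos 1 by field_simp,
    div_lt_div_iff_of_pos_right hcos1]
  linarith
end

section
/- Let n ≥ 2 and let x₁, …, xₙ be real numbers that are either all in (0,1] or all in [1,∞). Then ∏_{i=1}^n (1 + x_i) ≤ 2^{n-1} · (1 + ∏_{i=1}^n x_i). -/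
/-!
Since `2 (1 + a b) - (1 + a) (1 + b) = (1 - a) (1 - b)`, Weierstrass' inequality
`(1 + a) (1 + b) ≤ 2 (1 + a b)` holds whenever `a` and `b` lie on the same side of `1`.
Both `[0, 1]` and `[1, ∞)` are multiplicative submonoids of `ℝ`, so a partial product `∏ x i`
stays on the same side of `1` as the next factor, and induction on the number of factors gives
`2 ∏ (1 + x i) ≤ 2 ^ n (1 + ∏ x i)`.
-/

open Finset

theorem one_add_mul_one_add_le_two_mul {a b : ℝ} (h : 0 ≤ (1 - a) * (1 - b)) :
    (1 + a) * (1 + b) ≤ 2 * (1 + a * b) := by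
  linarith

theorem two_mul_prod_one_add_le_of_mem_submonoid {ι : Type*} (M : Submonoid ℝ)
    (hM : ∀ a ∈ M, ∀ b ∈ M, 0 ≤ (1 - a) * (1 - b)) (hM_neg_one_le : ∀ a ∈ M, -1 ≤ a)
    (s : Finset ι) {x : ι → ℝ} (hx : ∀ i ∈ s, x i ∈ M) :
    2 * ∏ i ∈ s, (1 + x i) ≤ 2 ^ #s * (1 + ∏ i ∈ s, x i) := by
  classical
  induction s using Finset.induction_on with
  | empty => norm_num
  | insert a s ha ih =>
    have hs : ∀ i ∈ s, x i ∈ M := fun i hi => hx i (mem_insert_of_mem hi)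
    have hxa : x a ∈ M := hx a (mem_insert_self a s)
    rw [prod_insert ha, prod_insert ha, card_insert_of_notMem ha]
    calc 2 * ((1 + x a) * ∏ i ∈ s, (1 + x i))
        = (1 + x a) * (2 * ∏ i ∈ s, (1 + x i)) := by ring
      _ ≤ (1 + x a) * (2 ^ #s * (1 + ∏ i ∈ s, x i)) :=
        mul_le_mul_of_nonneg_left (ih hs) (by linarith [hM_neg_one_le _ hxa])
      _ = 2 ^ #s * ((1 + x a) * (1 + ∏ i ∈ s, x i)) := by ring
      _ ≤ 2 ^ #s * (2 * (1 + x a * ∏ i ∈ s, x i)) :=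
        mul_le_mul_of_nonneg_left (one_add_mul_one_add_le_two_mul (hM _ hxa _ (prod_mem hs)))
          (by positivity)
      _ = 2 ^ (#s + 1) * (1 + x a * ∏ i ∈ s, x i) := by ring

def Real.oneLESubmonoid : Submonoid ℝ where
  carrier := Set.Ici 1
  one_mem' := Set.self_mem_Ici
  mul_mem' ha hb := Set.mem_Ici.2 (one_le_mul_of_one_le_of_one_le ha hb)

theorem Real.mem_oneLESubmonoid {a : ℝ} : a ∈ Real.oneLESubmonoid ↔ 1 ≤ a := Iff.rfl

section

variable {ι : Type*} (s : Finset ι) {x : ι → ℝ}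

theorem two_mul_prod_one_add_le_of_mem_unitInterval (hx : ∀ i ∈ s, x i ∈ unitInterval) :
    2 * ∏ i ∈ s, (1 + x i) ≤ 2 ^ #s * (1 + ∏ i ∈ s, x i) :=
  two_mul_prod_one_add_le_of_mem_submonoid unitInterval.submonoid
    (fun _ ha _ hb => mul_nonneg (sub_nonneg.2 ha.2) (sub_nonneg.2 hb.2))
    (fun _ ha => by linarith [ha.1]) s hx

theorem two_mul_prod_one_add_le_of_one_le (hx : ∀ i ∈ s, 1 ≤ x i) :
    2 * ∏ i ∈ s, (1 + x i) ≤ 2 ^ #s * (1 + ∏ i ∈ s, x i) :=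
  two_mul_prod_one_add_le_of_mem_submonoid Real.oneLESubmonoid
    (fun _ ha _ hb => mul_nonneg_of_nonpos_of_nonpos (sub_nonpos.2 ha) (sub_nonpos.2 hb))
    (fun _ ha => by linarith [Real.mem_oneLESubmonoid.1 ha]) s hx

end

/-- If `n ≥ 2` and `x₁, …, xₙ` are real numbers that are either all in `(0,1]` or all
in `[1,∞)`, then `∏ i, (1 + x i) ≤ 2^(n-1) * (1 + ∏ i, x i)`. -/
theorem prod_one_add_le (n : ℕ) (hn : 2 ≤ n) (x : Fin n → ℝ)
    (h : (∀ i, x i ∈ Set.Ioc (0:ℝ) 1) ∨ (∀ i, x i ∈ Set.Ici (1:ℝ))) :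
    ∏ i, (1 + x i) ≤ 2 ^ (n - 1) * (1 + ∏ i, x i) := by
  have key : 2 * ∏ i, (1 + x i) ≤ 2 ^ n * (1 + ∏ i, x i) := by
    rcases h with h | h
    · simpa using two_mul_prod_one_add_le_of_mem_unitInterval univ
        fun i _ => Set.Ioc_subset_Icc_self (h i)
    · simpa using two_mul_prod_one_add_le_of_one_le univ fun i _ => h i
  obtain ⟨m, rfl⟩ : ∃ m, n = m + 1 := ⟨n - 1, by omega⟩
  rw [pow_succ] at key
  rw [Nat.add_sub_cancel]
  linarith
end

section
/- Let J be either (0,1] or [1,∞), and let f be a positive function of class C² on J with f(1) = 1 which is log-convex on J (i.e. ln∘f is convex on J). If either (i) both f and x ↦ x·f(x) are strictly decreasing on J, or (ii) both f and x ↦ x·f(x) are strictly increasing on J, then f is an l-Weierstrass function on J: f(x·y) ≥ f(x) + f(y) - 1 for all x, y ∈ J. -/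
/-!
With `φ = log ∘ f`, comparing the secant slopes of the convex function `φ` over the interval
between `1` and `y` and over its dilate by `x` gives `x φ(y) ≤ φ(xy) - φ(x)`, i.e.
`f(x) f(y)^x ≤ f(xy)`, for `x, y` on the same side of `1`. When `f` is increasing,
`f(y)^x ≥ f(y)` and `(f x - 1)(f y - 1) ≥ 0`, so `f(x) + f(y) - 1 ≤ f(x) f(y) ≤ f(xy)`. When `f`
and `x f(x)` decrease on `[1, ∞)`, Bernoulli's inequality `f(y)^x ≥ 1 + x (f y - 1)` and
`x f(x) ≤ 1` do the same job. When they decrease on `(0, 1]`, the secant argument is too weak;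
there `t ↦ f(xt) - f(t)` has derivative `x f'(xt) - f'(t) ≤ 0`, because `f'/f` increases
(log-convexity), `f' ≤ 0` and `f(t) ≤ x f(xt)`; comparing its values at `y` and `1` gives the
claim.
-/

open Set Real

theorem ConvexOn.slope_le_slope {𝕜 : Type*} [Field 𝕜] [LinearOrder 𝕜] [IsStrictOrderedRing 𝕜]
    {s : Set 𝕜} {φ : 𝕜 → 𝕜} (hφ : ConvexOn 𝕜 s φ) {a b c d : 𝕜} (ha : a ∈ s) (hb : b ∈ s)
    (hc : c ∈ s) (hd : d ∈ s) (hab : a < b) (hcd : c < d) (hac : a ≤ c) (hbd : b ≤ d) :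
    slope φ a b ≤ slope φ c d :=
  calc slope φ a b ≤ slope φ a d :=
        hφ.slope_mono ha ⟨hb, hab.ne'⟩ ⟨hd, (hab.trans_le hbd).ne'⟩ hbd
    _ = slope φ d a := slope_comm φ a d
    _ ≤ slope φ d c := hφ.slope_mono hd ⟨ha, (hac.trans_lt hcd).ne⟩ ⟨hc, hcd.ne⟩ hac
    _ = slope φ c d := slope_comm φ d c

theorem ConvexOn.mul_sub_le_sub_apply_mul {s : Set ℝ} {φ : ℝ → ℝ} (hφ : ConvexOn ℝ s φ)
    {x y : ℝ} (h1 : 1 ∈ s) (hx : x ∈ s) (hy : y ∈ s) (hxy : x * y ∈ s) (hx0 : 0 < x)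
    (hy0 : 0 < y) (hside : (x ≤ 1 ∧ y ≤ 1) ∨ (1 ≤ x ∧ 1 ≤ y)) :
    x * (φ y - φ 1) ≤ φ (x * y) - φ x := by
  rcases eq_or_ne x 1 with rfl | hx_ne
  · simp
  rcases eq_or_ne y 1 with rfl | hy_ne
  · simp
  rcases hside with ⟨hx1', hy1'⟩ | ⟨hx1', hy1'⟩
  · have hx1 := lt_of_le_of_ne hx1' hx_ne
    have hy1 := lt_of_le_of_ne hy1' hy_ne
    have h := hφ.slope_le_slope hxy hx hy h1 (by nlinarith) hy1 (by nlinarith) hx1.le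
    rw [slope_def_field, slope_def_field, div_le_div_iff₀ (by nlinarith) (by linarith)] at h
    nlinarith
  · have hx1 := lt_of_le_of_ne' hx1' hx_ne
    have hy1 := lt_of_le_of_ne' hy1' hy_ne
    have h := hφ.slope_le_slope h1 hy hx hxy hy1 (by nlinarith) hx1.le (by nlinarith)
    rw [slope_def_field, slope_def_field, div_le_div_iff₀ (by linarith) (by nlinarith)] at h
    nlinarith

theorem mul_rpow_le_of_convexOn_log {s : Set ℝ} {f : ℝ → ℝ}
    (hlog : ConvexOn ℝ s (fun x => log (f x))) (hpos : ∀ x ∈ s, 0 < f x) (hf1 : f 1 = 1)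
    {x y : ℝ} (h1 : 1 ∈ s) (hx : x ∈ s) (hy : y ∈ s) (hxy : x * y ∈ s) (hx0 : 0 < x)
    (hy0 : 0 < y) (hside : (x ≤ 1 ∧ y ≤ 1) ∨ (1 ≤ x ∧ 1 ≤ y)) :
    f x * f y ^ x ≤ f (x * y) := by
  have key := hlog.mul_sub_le_sub_apply_mul h1 hx hy hxy hx0 hy0 hside
  simp only [hf1, log_one, sub_zero] at key
  calc f x * f y ^ x = exp (log (f x) + x * log (f y)) := by
        rw [exp_add, exp_log (hpos x hx), rpow_def_of_pos (hpos y hy), mul_comm x]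
    _ ≤ exp (log (f (x * y))) := exp_le_exp.2 (by linarith)
    _ = f (x * y) := exp_log (hpos _ hxy)

theorem add_sub_one_le_of_monotoneOn {s : Set ℝ} {f : ℝ → ℝ}
    (hlog : ConvexOn ℝ s (fun x => log (f x))) (hpos : ∀ x ∈ s, 0 < f x) (hf1 : f 1 = 1)
    (hmono : MonotoneOn f s) {x y : ℝ} (h1 : 1 ∈ s) (hx : x ∈ s) (hy : y ∈ s)
    (hxy : x * y ∈ s) (hx0 : 0 < x) (hy0 : 0 < y) (hside : (x ≤ 1 ∧ y ≤ 1) ∨ (1 ≤ x ∧ 1 ≤ y)) :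
    f x + f y - 1 ≤ f (x * y) := by
  have key := mul_rpow_le_of_convexOn_log hlog hpos hf1 h1 hx hy hxy hx0 hy0 hside
  have hfx := hpos x hx
  have hfy := hpos y hy
  rcases hside with ⟨hx1, hy1⟩ | ⟨hx1, hy1⟩
  · have hfx1 : f x ≤ 1 := hf1 ▸ hmono hx h1 hx1
    have hfy1 : f y ≤ 1 := hf1 ▸ hmono hy h1 hy1
    have hrpow := self_le_rpow_of_le_one hfy.le hfy1 hx1
    nlinarith [mul_le_mul_of_nonneg_left hrpow hfx.le]
  · have hfx1 : 1 ≤ f x := hf1 ▸ hmono h1 hx hx1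
    have hfy1 : 1 ≤ f y := hf1 ▸ hmono h1 hy hy1
    have hrpow := self_le_rpow_of_one_le hfy1 hx1
    nlinarith [mul_le_mul_of_nonneg_left hrpow hfx.le]

theorem add_sub_one_le_of_antitoneOn_of_one_le {s : Set ℝ} {f : ℝ → ℝ}
    (hlog : ConvexOn ℝ s (fun x => log (f x))) (hpos : ∀ x ∈ s, 0 < f x) (hf1 : f 1 = 1)
    (hanti : AntitoneOn f s) (hmulanti : AntitoneOn (fun t => t * f t) s) {x y : ℝ}
    (h1 : 1 ∈ s) (hx : x ∈ s) (hy : y ∈ s) (hxy : x * y ∈ s) (hx1 : 1 ≤ x) (hy1 : 1 ≤ y) :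
    f x + f y - 1 ≤ f (x * y) := by
  have key := mul_rpow_le_of_convexOn_log hlog hpos hf1 h1 hx hy hxy (zero_lt_one.trans_le hx1)
    (zero_lt_one.trans_le hy1) (.inr ⟨hx1, hy1⟩)
  have hfy1 : f y ≤ 1 := hf1 ▸ hanti h1 hy hy1
  have hxfx : x * f x ≤ 1 := by simpa [hf1] using hmulanti h1 hx hx1
  have hbernoulli : 1 + x * (f y - 1) ≤ f y ^ x := by
    simpa using one_add_mul_self_le_rpow_one_add (by linarith [hpos y hy] : -1 ≤ f y - 1) hx1
  nlinarith [mul_le_mul_of_nonneg_left hbernoulli (hpos x hx).le]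

theorem deriv_mul_le_of_convexOn_log {s : Set ℝ} {f : ℝ → ℝ}
    (hlog : ConvexOn ℝ s (fun x => log (f x))) (hpos : ∀ x ∈ s, 0 < f x) {p q : ℝ}
    (hp : p ∈ s) (hq : q ∈ s) (hpq : p ≤ q) (hfp : DifferentiableAt ℝ f p)
    (hfq : DifferentiableAt ℝ f q) :
    deriv f p * f q ≤ deriv f q * f p := by
  rcases hpq.eq_or_lt with rfl | hpq
  · rfl
  have h := (hlog.le_slope_of_hasDerivAt hp hq hpq (hfp.hasDerivAt.log (hpos p hp).ne')).trans
    (hlog.slope_le_of_hasDerivAt hp hq hpq (hfq.hasDerivAt.log (hpos q hq).ne'))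
  rwa [div_le_div_iff₀ (hpos p hp) (hpos q hq)] at h

theorem antitoneOn_comp_mul_sub_of_convexOn_log {f : ℝ → ℝ}
    (hd : DifferentiableOn ℝ f (Ioc 0 1)) (hpos : ∀ x ∈ Ioc (0 : ℝ) 1, 0 < f x)
    (hlog : ConvexOn ℝ (Ioc 0 1) (fun x => log (f x))) (hanti : AntitoneOn f (Ioc 0 1))
    (hmulanti : AntitoneOn (fun t => t * f t) (Ioc 0 1)) {x : ℝ} (hx : x ∈ Ioc (0 : ℝ) 1) :
    AntitoneOn (fun t => f (x * t) - f t) (Ioc 0 1) := by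
  have hmaps : MapsTo (x * ·) (Ioc (0 : ℝ) 1) (Ioc 0 1) := fun t ht =>
    ⟨mul_pos hx.1 ht.1, mul_le_one₀ hx.2 ht.1.le ht.2⟩
  have hdg : DifferentiableOn ℝ (fun t => f (x * t) - f t) (Ioc 0 1) :=
    (hd.comp (differentiableOn_id.const_mul x) hmaps).sub hd
  refine antitoneOn_of_deriv_nonpos (convex_Ioc 0 1) hdg.continuousOn
    (hdg.mono interior_subset) fun t ht => ?_
  rw [interior_Ioc] at ht
  have htJ : t ∈ Ioc (0 : ℝ) 1 := Ioo_subset_Ioc_self ht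
  have hxt : x * t ≤ t := mul_le_of_le_one_left ht.1.le hx.2
  have hdiff : ∀ u ∈ Ioo (0 : ℝ) 1, DifferentiableAt ℝ f u := fun u hu =>
    hd.differentiableAt (Ioc_mem_nhds hu.1 hu.2)
  have hxtJ : x * t ∈ Ioo (0 : ℝ) 1 := ⟨mul_pos hx.1 ht.1, hxt.trans_lt ht.2⟩
  have hg : HasDerivAt (fun t => f (x * t) - f t) (deriv f (x * t) * x - deriv f t) t := by
    have hmul : HasDerivAt (x * ·) x t := by simpa using (hasDerivAt_id t).const_mul x
    exact ((hdiff _ hxtJ).hasDerivAt.comp t hmul).sub (hdiff t ht).hasDerivAt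
  have hf'_nonpos : deriv f t ≤ 0 := by
    rw [← derivWithin_of_mem_nhds (Ioc_mem_nhds ht.1 ht.2)]
    exact hanti.derivWithin_nonpos
  have hlogderiv := deriv_mul_le_of_convexOn_log hlog hpos (hmaps htJ) htJ hxt (hdiff _ hxtJ)
    (hdiff t ht)
  have hft : f t ≤ x * f (x * t) := by
    have h := hmulanti (hmaps htJ) htJ hxt
    simp only at h
    nlinarith [ht.1]
  rw [hg.deriv, sub_nonpos]
  refine le_of_mul_le_mul_right ?_ (hpos t htJ)
  calc deriv f (x * t) * x * f t ≤ x * f (x * t) * deriv f t := by nlinarith [hx.1]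
    _ ≤ f t * deriv f t := mul_le_mul_of_nonpos_right hft hf'_nonpos
    _ = deriv f t * f t := mul_comm _ _

/-- Let `J` be either `(0,1]` or `[1,∞)`, and let `f` be a positive `C²` function on `J`
with `f 1 = 1` which is log-convex on `J`. If either both `f` and `x ↦ x * f x` are
strictly decreasing on `J`, or both are strictly increasing on `J`, then `f` is an
l-Weierstrass function on `J`: `f (x*y) ≥ f x + f y - 1` for all `x, y ∈ J`. -/
theorem lWeierstrass_of_logConvex (J : Set ℝ)
    (hJ : J = Set.Ioc (0:ℝ) 1 ∨ J = Set.Ici (1:ℝ))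
    (f : ℝ → ℝ)
    (hC2 : ContDiffOn ℝ 2 f J)
    (hpos : ∀ x ∈ J, 0 < f x)
    (hf1 : f 1 = 1)
    (hlog : ConvexOn ℝ J (fun x => Real.log (f x)))
    (hmono : (StrictAntiOn f J ∧ StrictAntiOn (fun x => x * f x) J) ∨
             (StrictMonoOn f J ∧ StrictMonoOn (fun x => x * f x) J)) :
    ∀ x ∈ J, ∀ y ∈ J, f x + f y - 1 ≤ f (x * y) := by
  intro x hx y hy
  rcases hJ with rfl | rfl
  · have h1 : (1 : ℝ) ∈ Ioc 0 1 := ⟨one_pos, le_rfl⟩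
    have hxy : x * y ∈ Ioc (0 : ℝ) 1 := ⟨mul_pos hx.1 hy.1, mul_le_one₀ hx.2 hy.1.le hy.2⟩
    rcases hmono with ⟨hanti, hmulanti⟩ | ⟨hmono, -⟩
    · have h := antitoneOn_comp_mul_sub_of_convexOn_log (hC2.differentiableOn (by norm_num))
        hpos hlog hanti.antitoneOn hmulanti.antitoneOn hx hy h1 hy.2
      simp only [mul_one, hf1] at h
      linarith
    · exact add_sub_one_le_of_monotoneOn hlog hpos hf1 hmono.monotoneOn h1 hx hy hxy hx.1 hy.1
        (.inl ⟨hx.2, hy.2⟩)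
  · have hxy : x * y ∈ Ici (1 : ℝ) :=
      mem_Ici.2 (one_le_mul_of_one_le_of_one_le hx hy)
    rcases hmono with ⟨hanti, hmulanti⟩ | ⟨hmono, -⟩
    · exact add_sub_one_le_of_antitoneOn_of_one_le hlog hpos hf1 hanti.antitoneOn
        hmulanti.antitoneOn self_mem_Ici hx hy hxy hx hy
    · exact add_sub_one_le_of_monotoneOn hlog hpos hf1 hmono.monotoneOn self_mem_Ici hx hy hxy
        (zero_lt_one.trans_le hx) (zero_lt_one.trans_le hy) (.inr ⟨hx, hy⟩)
end

section
/- Let a > 0 and suppose the Euler gamma function Γ is strictly decreasing on the interval (0, a+1] (this holds precisely when a ≤ x₁ := x_min - 1 ≈ 0.4616, where x_min is the unique minimizer of Γ on (0,∞)). Then for all u, v ∈ (0, a]: Γ(u·v/a) ≥ Γ(u) + Γ(v) - Γ(a). -/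
/-!
The map `t ↦ Γ(1/t)` is convex on `(0, ∞)`: it equals `t · Γ(1/t + 1)`, the perspective of the
convex function `x ↦ Γ(x + 1)`. The points `1/u, 1/v` lie in `[1/a, p]` with
`p = 1/u + 1/v - 1/a` and have the same sum as the endpoints, so convexity gives
`Γ(u) + Γ(v) ≤ Γ(a) + Γ(1/p)`. Finally `u v / a ≤ 1/p ≤ a`, and `Γ` is decreasing there.
-/

open Set Real

theorem ConvexOn.mul_comp_inv {f : ℝ → ℝ} (hf : ConvexOn ℝ (Ioi 0) f) :
    ConvexOn ℝ (Ioi 0) (fun t => t * f t⁻¹) := by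
  refine ⟨convex_Ioi 0, fun t₁ ht₁ t₂ ht₂ a b ha hb hab => ?_⟩
  simp only [mem_Ioi, smul_eq_mul] at *
  have ht : 0 < a * t₁ + b * t₂ := by
    rcases ha.eq_or_lt with rfl | ha
    · simp_all
    · positivity
  set t := a * t₁ + b * t₂
  have hcomb : (a * t₁ / t) • t₁⁻¹ + (b * t₂ / t) • t₂⁻¹ = t⁻¹ := by
    simp only [smul_eq_mul]; field_simp; linarith
  have hweights : a * t₁ / t + b * t₂ / t = 1 := by rw [← add_div, div_self ht.ne']
  have key := hf.2 (inv_pos.2 ht₁) (inv_pos.2 ht₂) (by positivity) (by positivity) hweights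
  rw [hcomb, smul_eq_mul, smul_eq_mul] at key
  calc t * f t⁻¹ ≤ t * (a * t₁ / t * f t₁⁻¹ + b * t₂ / t * f t₂⁻¹) :=
        mul_le_mul_of_nonneg_left key ht.le
    _ = a * (t₁ * f t₁⁻¹) + b * (t₂ * f t₂⁻¹) := by field_simp

theorem ConvexOn.map_add_map_le_of_add_eq {s : Set ℝ} {f : ℝ → ℝ} (hf : ConvexOn ℝ s f)
    {m M x y : ℝ} (hm : m ∈ s) (hM : M ∈ s) (hx : x ∈ Icc m M) (hxy : x + y = m + M) :
    f x + f y ≤ f m + f M := by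
  obtain ⟨hmx, hxM⟩ := hx
  rcases hmx.eq_or_lt with rfl | hmx
  · rw [show y = M by linarith]
  have hmM : 0 < M - m := by linarith
  set θ := (x - m) / (M - m)
  have hθ₀ : 0 ≤ θ := div_nonneg (by linarith) hmM.le
  have hθ₁ : θ ≤ 1 := div_le_one_of_le₀ (by linarith) hmM.le
  have hx : (1 - θ) • m + θ • M = x := by
    simp only [θ, smul_eq_mul]; field_simp; ring
  have hy : θ • m + (1 - θ) • M = y := by
    simp only [smul_eq_mul] at hx ⊢; linarith
  have hfx := hf.2 hm hM (sub_nonneg.2 hθ₁) hθ₀ (sub_add_cancel 1 θ)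
  have hfy := hf.2 hm hM hθ₀ (sub_nonneg.2 hθ₁) (add_sub_cancel θ 1)
  rw [hx] at hfx
  rw [hy] at hfy
  simp only [smul_eq_mul] at hfx hfy
  linarith

theorem Real.convexOn_Gamma_add_one : ConvexOn ℝ (Ioi 0) fun x => Gamma (x + 1) :=
  ((convexOn_Gamma.translate_right 1).subset
      (fun x (hx : 0 < x) => show (0 : ℝ) < 1 + x by linarith) (convex_Ioi 0)).congr
    fun x _ => by simp only [Function.comp_apply, add_comm]

theorem Real.convexOn_Gamma_inv : ConvexOn ℝ (Ioi 0) fun t => Gamma t⁻¹ :=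
  convexOn_Gamma_add_one.mul_comp_inv.congr fun t (ht : 0 < t) => by
    simp only [Gamma_add_one (inv_ne_zero ht.ne'), ← mul_assoc, mul_inv_cancel₀ ht.ne', one_mul]

theorem mul_div_le_inv_inv_add_inv_sub_inv {a u v : ℝ} (hu : 0 < u) (hua : u ≤ a)
    (hv : 0 < v) (hva : v ≤ a) : u * v / a ≤ (u⁻¹ + v⁻¹ - a⁻¹)⁻¹ := by
  have ha : 0 < a := hu.trans_le hua
  have hpos : 0 < u⁻¹ + v⁻¹ - a⁻¹ := by
    have := inv_anti₀ hv hva; have := inv_pos.2 hu; linarith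
  rw [le_inv_comm₀ (by positivity) hpos, inv_div, ← sub_nonneg]
  have h : a / (u * v) - (u⁻¹ + v⁻¹ - a⁻¹) = (a - u) * (a - v) / (a * u * v) := by
    field_simp; ring
  rw [h]
  exact div_nonneg (mul_nonneg (sub_nonneg.2 hua) (sub_nonneg.2 hva)) (by positivity)

theorem gamma_lWeierstrass_subst_general (a : ℝ)
    (hdec : StrictAntiOn Real.Gamma (Set.Ioc 0 (a + 1))) :
    ∀ u ∈ Set.Ioc (0:ℝ) a, ∀ v ∈ Set.Ioc (0:ℝ) a,
      Real.Gamma u + Real.Gamma v - Real.Gamma a ≤ Real.Gamma (u * v / a) := by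
  rintro u ⟨hu, hua⟩ v ⟨hv, hva⟩
  have ha : 0 < a := hu.trans_le hua
  set p := u⁻¹ + v⁻¹ - a⁻¹
  have hap : a⁻¹ ≤ u⁻¹ := inv_anti₀ hu hua
  have hup : u⁻¹ ≤ p := by have := inv_anti₀ hv hva; linarith
  have hp : 0 < p := (inv_pos.2 hu).trans_le hup
  have hmajor : Gamma u + Gamma v ≤ Gamma a + Gamma p⁻¹ := by
    simpa only [inv_inv] using convexOn_Gamma_inv.map_add_map_le_of_add_eq (inv_pos.2 ha)
      hp ⟨hap, hup⟩ (by ring : u⁻¹ + v⁻¹ = a⁻¹ + p)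
  have hle : u * v / a ≤ p⁻¹ := mul_div_le_inv_inv_add_inv_sub_inv hu hua hv hva
  have hpu : p⁻¹ ≤ u := inv_le_of_inv_le₀ hu hup
  have hanti : Gamma p⁻¹ ≤ Gamma (u * v / a) :=
    hdec.antitoneOn ⟨by positivity, by linarith⟩ ⟨inv_pos.2 hp, by linarith⟩ hle
  linarith

/-- Let `a > 0` and suppose the Euler gamma function `Γ` is strictly decreasing on
`(0, a+1]`. Then for all `u, v ∈ (0, a]`: `Γ (u*v/a) ≥ Γ u + Γ v - Γ a`. -/
theorem gamma_lWeierstrass_subst (a : ℝ) (ha : 0 < a)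
    (hdec : StrictAntiOn Real.Gamma (Set.Ioc 0 (a + 1))) :
    ∀ u ∈ Set.Ioc (0:ℝ) a, ∀ v ∈ Set.Ioc (0:ℝ) a,
      Real.Gamma u + Real.Gamma v - Real.Gamma a ≤ Real.Gamma (u * v / a) :=
  gamma_lWeierstrass_subst_general a hdec
end
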